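/- arXiv:1908.06058 — 6 statements merged into one kernel-verified Lean document; each statement's English description precedes it below -/
import Mathlib

section
/- Fix integers m ≥ 2 squarefree and k ≥ 2. For a positive integer M, let r_k(M) denote the maximum size of a subset R of {0,1,…,M−1} such that for all distinct r, r' ∈ R, r − r' is never congruent to a nonzero k-th power modulo M. Then r_k(m^k) ≥ m^{k−1} · r_k(m). -/
/-- `rk k M` is the maximum size of a subset `R ⊆ {0, …, M-1}` such that for all
distinct `r, r' ∈ R`, the difference `r - r'` is never congruent modulo `M` to a
nonzero k-th power, i.e. to `x ^ k` for an integer `x` with `x ^ k ≢ 0 (mod M)`. -/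
noncomputable def rk (k M : ℕ) : ℕ :=
  sSup {n : ℕ | ∃ R : Finset ℕ, R ⊆ Finset.range M ∧
    (∀ r ∈ R, ∀ r' ∈ R, r ≠ r' → ∀ x : ℤ,
      ((r : ℤ) - (r' : ℤ) ≡ x ^ k [ZMOD (M : ℤ)]) → x ^ k ≡ 0 [ZMOD (M : ℤ)]) ∧
    R.card = n}

lemma rk_set_bddAbove (k M : ℕ) : BddAbove {n : ℕ | ∃ R : Finset ℕ, R ⊆ Finset.range M ∧
    (∀ r ∈ R, ∀ r' ∈ R, r ≠ r' → ∀ x : ℤ,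
      ((r : ℤ) - (r' : ℤ) ≡ x ^ k [ZMOD (M : ℤ)]) → x ^ k ≡ 0 [ZMOD (M : ℤ)]) ∧
    R.card = n} := by
  refine ⟨M, fun n hn => ?_⟩
  obtain ⟨R, hR, -, hc⟩ := hn
  simpa [← hc] using (Finset.card_le_card hR).trans (by simp)

theorem stmt_9 (m k : ℕ) (hm : 2 ≤ m) (hsf : Squarefree m) (hk : 2 ≤ k) :
    m ^ (k - 1) * rk k m ≤ rk k (m ^ k) := by
  -- obtain an optimal witness R for rk k m
  have hne : (0 : ℕ) ∈ {n : ℕ | ∃ R : Finset ℕ, R ⊆ Finset.range m ∧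
      (∀ r ∈ R, ∀ r' ∈ R, r ≠ r' → ∀ x : ℤ,
        ((r : ℤ) - (r' : ℤ) ≡ x ^ k [ZMOD (m : ℤ)]) → x ^ k ≡ 0 [ZMOD (m : ℤ)]) ∧
      R.card = n} := ⟨∅, by simp⟩
  have hmem := Nat.sSup_mem ⟨0, hne⟩ (rk_set_bddAbove k m)
  obtain ⟨R, hRsub, hRprop, hRcard⟩ := hmem
  -- build the witness set A for M = m^k
  set A : Finset ℕ :=
    (Finset.range (m ^ (k - 1)) ×ˢ R).image (fun p => p.1 * m + p.2) with hA
  have hr_lt : ∀ r ∈ R, r < m := fun r hr => Finset.mem_range.mp (hRsub hr)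
  have hinj : Set.InjOn (fun p : ℕ × ℕ => p.1 * m + p.2)
      ↑(Finset.range (m ^ (k - 1)) ×ˢ R) := by
    rintro ⟨u, r⟩ h1 ⟨u', r'⟩ h2 heq
    simp only [Finset.coe_product, Set.mem_prod, Finset.mem_coe, Finset.mem_range] at h1 h2
    simp only at heq
    have hr : r < m := hr_lt r h1.2
    have hr' : r' < m := hr_lt r' h2.2
    have e1 : (u * m + r) % m = r := by
      rw [Nat.add_comm, Nat.add_mul_mod_self_right, Nat.mod_eq_of_lt hr]
    have e2 : (u' * m + r') % m = r' := by
      rw [Nat.add_comm, Nat.add_mul_mod_self_right, Nat.mod_eq_of_lt hr']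
    have hrr : r = r' := by rw [← e1, ← e2, heq]
    have huu : u = u' := by
      have hm0 : 0 < m := by omega
      have : u * m = u' * m := by omega
      exact Nat.eq_of_mul_eq_mul_right hm0 this
    simp [hrr, huu]
  have hcardA : A.card = m ^ (k - 1) * rk k m := by
    rw [hA, Finset.card_image_of_injOn hinj, Finset.card_product, Finset.card_range, hRcard]
    rfl
  -- A is a valid witness for rk k (m^k)
  have hsub : A ⊆ Finset.range (m ^ k) := by
    intro a ha
    rw [hA, Finset.mem_image] at ha
    obtain ⟨⟨u, r⟩, hp, rfl⟩ := ha
    simp only [Finset.mem_product, Finset.mem_range] at hp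
    have hr : r < m := hr_lt r hp.2
    have hu : u < m ^ (k - 1) := hp.1
    have hlt : u * m + r < m ^ (k - 1) * m := by
      calc u * m + r < (u + 1) * m := by nlinarith
        _ ≤ m ^ (k - 1) * m := Nat.mul_le_mul_right m hu
    have hpow : m ^ (k - 1) * m = m ^ k := by
      rw [← pow_succ]
      congr 1
      omega
    rw [hpow] at hlt
    simpa using hlt
  -- main divisibility fact
  have hdvd : ∀ x : ℤ, (m : ℤ) ∣ x ^ k → ((m : ℤ) ^ k) ∣ x ^ k := by
    intro x hx
    have hsfz : Squarefree (m : ℤ) := Int.squarefree_natCast.mpr hsf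
    have : (m : ℤ) ∣ x := (hsfz.dvd_pow_iff_dvd (by omega)).mp hx
    exact pow_dvd_pow_of_dvd this k
  have hprop : ∀ r ∈ A, ∀ r' ∈ A, r ≠ r' → ∀ x : ℤ,
      ((r : ℤ) - (r' : ℤ) ≡ x ^ k [ZMOD ((m ^ k : ℕ) : ℤ)]) →
      x ^ k ≡ 0 [ZMOD ((m ^ k : ℕ) : ℤ)] := by
    intro a ha a' ha' hne x hcong
    rw [hA, Finset.mem_image] at ha ha'
    obtain ⟨⟨u, r⟩, hp, rfl⟩ := ha
    obtain ⟨⟨u', r'⟩, hp', rfl⟩ := ha'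
    simp only [Finset.mem_product, Finset.mem_range] at hp hp'
    -- reduce mod m
    have hdvdm : ((m : ℤ)) ∣ ((m ^ k : ℕ) : ℤ) := by
      push_cast
      exact dvd_pow_self _ (by omega)
    have hcongm : ((u * m + r : ℕ) : ℤ) - ((u' * m + r' : ℕ) : ℤ) ≡ x ^ k [ZMOD (m : ℤ)] :=
      hcong.of_dvd hdvdm
    have hrr' : ((r : ℤ) - (r' : ℤ)) ≡ x ^ k [ZMOD (m : ℤ)] := by
      have h0 : ((u : ℤ) - u') * m ≡ 0 [ZMOD (m : ℤ)] :=
        (Int.modEq_zero_iff_dvd).mpr ⟨(u : ℤ) - u', mul_comm _ _⟩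
      have hsub := hcongm.sub h0
      have e1 : ((u * m + r : ℕ) : ℤ) - ((u' * m + r' : ℕ) : ℤ) - ((u : ℤ) - u') * m
          = (r : ℤ) - (r' : ℤ) := by push_cast; ring
      rwa [e1, sub_zero] at hsub
    have hxk : (m : ℤ) ∣ x ^ k := by
      by_cases hrr : r = r'
      · subst hrr
        have : ((r : ℤ) - (r : ℤ)) = 0 := by ring
        have h0 : (0 : ℤ) ≡ x ^ k [ZMOD (m : ℤ)] := by rwa [this] at hrr'
        exact (Int.modEq_zero_iff_dvd).mp h0.symm
      · have := hRprop r hp.2 r' hp'.2 hrr x hrr'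
        exact (Int.modEq_zero_iff_dvd).mp this
    have hfin : ((m : ℤ)) ^ k ∣ x ^ k := hdvd x hxk
    have : (((m ^ k : ℕ)) : ℤ) ∣ x ^ k := by push_cast; exact hfin
    exact (Int.modEq_zero_iff_dvd).mpr this
  -- conclude
  rw [rk]
  refine le_csSup (rk_set_bddAbove k (m ^ k)) ?_
  exact ⟨A, hsub, hprop, hcardA⟩
end

section
/- Let p be a prime and k ≥ 2 an integer with p ∤ k. Then r_k(p^k) = p^{k−1} · r_k(p), where r_k(M) denotes the maximum size of a subset of {0,…,M−1} whose differences between distinct elements are never congruent to a nonzero k-th power modulo M. -/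
lemma intCast_unit_of_not_dvd {p : ℕ} (hp : p.Prime) {m : ℕ} {w : ℤ}
    (hw : ¬ (p:ℤ) ∣ w) : IsUnit ((w : ZMod (p ^ m))) := by
  have hcop : IsCoprime ((p:ℤ) ^ m) w :=
    ((Nat.prime_iff_prime_int.mp hp).coprime_iff_not_dvd.mpr hw).pow_left
  obtain ⟨a, b, hab⟩ := hcop
  have h1 : ((a * (p:ℤ)^m + b * w : ℤ) : ZMod (p^m)) = 1 := by rw [hab]; norm_num
  push_cast at h1
  have hp0 : ((p : ZMod (p^m)))^m = 0 := by
    rw [← Nat.cast_pow, ZMod.natCast_self]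
  rw [hp0, mul_zero, zero_add] at h1
  exact IsUnit.of_mul_eq_one _ ((mul_comm _ _).trans h1)

lemma hensel_pow {p k : ℕ} (hp : p.Prime) (hk2 : 2 ≤ k) (hpk : ¬ p ∣ k)
    {w x : ℤ} (hw : ¬ (p:ℤ) ∣ w) (hx : ¬ (p:ℤ) ∣ x)
    (h : w ≡ x ^ k [ZMOD (p:ℤ)]) :
    ∃ y : ℤ, ¬ (p:ℤ) ∣ y ∧ w ≡ y ^ k [ZMOD ((p^k : ℕ) : ℤ)] := by
  haveI : Fact p.Prime := ⟨hp⟩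
  have hk0 : k ≠ 0 := by omega
  haveI : NeZero (p ^ k) := ⟨pow_ne_zero k hp.pos.ne'⟩
  obtain ⟨uw, huw⟩ := intCast_unit_of_not_dvd hp (m := k) hw
  obtain ⟨ux, hux⟩ := intCast_unit_of_not_dvd hp (m := k) hx
  set f : (ZMod (p^k))ˣ →* (ZMod p)ˣ := ZMod.unitsMap (dvd_pow_self p hk0) with hf
  have hfs : Function.Surjective f := ZMod.unitsMap_surjective _
  -- cardinality of the kernel
  have h1 : Nat.card (ZMod (p^k))ˣ = Nat.card ((ZMod (p^k))ˣ ⧸ f.ker) * Nat.card f.ker :=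
    Subgroup.card_eq_card_quotient_mul_card_subgroup f.ker
  have h2 : Nat.card ((ZMod (p^k))ˣ ⧸ f.ker) = Nat.card (ZMod p)ˣ :=
    Nat.card_congr (QuotientGroup.quotientKerEquivOfSurjective f hfs).toEquiv
  have hU1 : Nat.card (ZMod (p^k))ˣ = p^(k-1) * (p-1) := by
    rw [Nat.card_eq_fintype_card, ZMod.card_units_eq_totient,
      Nat.totient_prime_pow hp (by omega)]
  have hU2 : Nat.card (ZMod p)ˣ = p - 1 := by
    haveI : NeZero p := ⟨hp.pos.ne'⟩
    rw [Nat.card_eq_fintype_card, ZMod.card_units_eq_totient, Nat.totient_prime hp]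
  have hcard : Nat.card f.ker = p ^ (k-1) := by
    rw [hU1, h2, hU2] at h1
    have hp1 : 0 < p - 1 := by have := hp.one_lt; omega
    have h3 : (p - 1) * Nat.card f.ker = (p - 1) * p ^ (k - 1) := by
      rw [← h1]; ring
    exact Nat.eq_of_mul_eq_mul_left hp1 h3
  have hcop : (Nat.card f.ker).Coprime k := by
    rw [hcard]
    exact Nat.Coprime.pow_left _ ((hp.coprime_iff_not_dvd).mpr hpk)
  -- uw * (ux^k)⁻¹ is in the kernel
  have hmem : uw * (ux ^ k)⁻¹ ∈ f.ker := by
    rw [MonoidHom.mem_ker, map_mul, map_inv, map_pow, mul_inv_eq_one]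
    apply Units.ext
    have e1 : ((f uw : (ZMod p)ˣ) : ZMod p) = (w : ZMod p) := by
      rw [hf, ZMod.unitsMap_def, Units.coe_map, huw]
      simp
    have e2 : ((f ux : (ZMod p)ˣ) : ZMod p) = (x : ZMod p) := by
      rw [hf, ZMod.unitsMap_def, Units.coe_map, hux]
      simp
    rw [Units.val_pow_eq_pow_val, e1, e2]
    have : (w : ZMod p) = ((x ^ k : ℤ) : ZMod p) := (ZMod.intCast_eq_intCast_iff _ _ _).mpr h
    rw [this]; push_cast; ring
  -- solve z^k = uw * (ux^k)⁻¹ inside the kernel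
  obtain ⟨z, hz⟩ := (Nat.Coprime.pow_left_bijective hcop).2
    (⟨uw * (ux ^ k)⁻¹, hmem⟩ : f.ker)
  have hz' : (z : (ZMod (p^k))ˣ) ^ k = uw * (ux ^ k)⁻¹ := by
    have := congrArg (fun a : f.ker => (a : (ZMod (p^k))ˣ)) hz
    simpa using this
  set y0 : (ZMod (p^k))ˣ := (z : (ZMod (p^k))ˣ) * ux with hy0
  have hy0k : y0 ^ k = uw := by
    rw [hy0, mul_pow, hz', inv_mul_cancel_right]
  -- pull back to ℤ
  set y : ℤ := ((y0 : ZMod (p^k)).val : ℤ) with hy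
  have hcong : w ≡ y ^ k [ZMOD ((p^k : ℕ) : ℤ)] := by
    have : (w : ZMod (p^k)) = ((y ^ k : ℤ) : ZMod (p^k)) := by
      rw [hy]
      push_cast
      rw [ZMod.natCast_val, ZMod.cast_id, ← huw, ← hy0k, Units.val_pow_eq_pow_val]
    exact (ZMod.intCast_eq_intCast_iff _ _ _).mp this
  refine ⟨y, ?_, hcong⟩
  intro hdvd
  have hmod : w ≡ y ^ k [ZMOD (p:ℤ)] := by
    refine hcong.of_dvd ?_
    push_cast
    exact dvd_pow_self _ hk0
  have hyk : y ^ k ≡ 0 [ZMOD (p:ℤ)] :=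
    (Int.modEq_zero_iff_dvd).mpr (dvd_pow hdvd hk0)
  exact hw ((Int.modEq_zero_iff_dvd).mp (hmod.trans hyk))

def good (k M : ℕ) (R : Finset ℕ) : Prop :=
  R ⊆ Finset.range M ∧
    (∀ r ∈ R, ∀ r' ∈ R, r ≠ r' → ∀ x : ℤ,
      ((r : ℤ) - (r' : ℤ) ≡ x ^ k [ZMOD (M : ℤ)]) → x ^ k ≡ 0 [ZMOD (M : ℤ)])

lemma rk_eq_sSup (k M : ℕ) : rk k M = sSup {n | ∃ R, good k M R ∧ R.card = n} := by
  unfold rk good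
  congr 1
  ext n
  simp only [Set.mem_setOf_eq, and_assoc]

lemma good_bddAbove (k M : ℕ) : BddAbove {n | ∃ R, good k M R ∧ R.card = n} := by
  refine ⟨M, fun n hn => ?_⟩
  obtain ⟨R, hR, rfl⟩ := hn
  simpa using Finset.card_le_card hR.1

lemma le_rk {k M : ℕ} {R : Finset ℕ} (h : good k M R) : R.card ≤ rk k M := by
  rw [rk_eq_sSup]
  exact le_csSup (good_bddAbove k M) ⟨R, h, rfl⟩

lemma exists_good (k M : ℕ) : ∃ R, good k M R ∧ R.card = rk k M := by
  rw [rk_eq_sSup]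
  have h0 : (0 : ℕ) ∈ {n | ∃ R, good k M R ∧ R.card = n} :=
    ⟨∅, ⟨by simp, by simp⟩, by simp⟩
  exact Nat.sSup_mem ⟨0, h0⟩ (good_bddAbove k M)

theorem stmt_10 (p : ℕ) (hp : p.Prime) (k : ℕ) (hk : 2 ≤ k) (hpk : ¬ p ∣ k) :
    rk k (p ^ k) = p ^ (k - 1) * rk k p := by
  haveI : Fact p.Prime := ⟨hp⟩
  have hk0 : k ≠ 0 := by omega
  have hpos : 0 < p := hp.pos
  have hprime : Prime (p : ℤ) := Nat.prime_iff_prime_int.mp hp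
  have hMk : p ^ (k - 1) * p = p ^ k := by
    rw [← pow_succ]
    congr 1
    omega
  -- characterization of x^k ≡ 0
  have hzero_pk : ∀ x : ℤ, (x ^ k ≡ 0 [ZMOD ((p ^ k : ℕ) : ℤ)]) ↔ (p : ℤ) ∣ x := by
    intro x
    rw [Int.modEq_zero_iff_dvd]
    push_cast
    exact Int.pow_dvd_pow_iff hk0
  have hzero_p : ∀ x : ℤ, (x ^ k ≡ 0 [ZMOD ((p : ℕ) : ℤ)]) ↔ (p : ℤ) ∣ x := by
    intro x
    rw [Int.modEq_zero_iff_dvd]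
    exact ⟨fun h => hprime.dvd_of_dvd_pow h, fun h => dvd_pow h hk0⟩
  -- distinct residues below p are not congruent mod p
  have hsmall : ∀ s s' : ℕ, s < p → s' < p → s ≠ s' → ¬ (p : ℤ) ∣ ((s : ℤ) - s') := by
    intro s s' hs hs' hne hd
    have h1 : (p : ℤ) ≤ |(s : ℤ) - s'| :=
      Int.le_of_dvd (by rw [abs_pos]; omega) ((dvd_abs _ _).mpr hd)
    rcases abs_cases ((s : ℤ) - s') with ⟨h2, _⟩ | ⟨h2, _⟩ <;> omega
  -- ======== lower bound ========
  obtain ⟨S, hS, hScard⟩ := exists_good k p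
  set T : Finset ℕ := (Finset.range (p ^ (k - 1)) ×ˢ S).image (fun q => q.2 + p * q.1) with hT
  have hmemT : ∀ r ∈ T, ∃ t s, t < p ^ (k - 1) ∧ s ∈ S ∧ r = s + p * t := by
    intro r hr
    rw [hT, Finset.mem_image] at hr
    obtain ⟨⟨t, s⟩, hts, rfl⟩ := hr
    rw [Finset.mem_product, Finset.mem_range] at hts
    exact ⟨t, s, hts.1, hts.2, rfl⟩
  have hSlt : ∀ s ∈ S, s < p := fun s hs => Finset.mem_range.mp (hS.1 hs)
  have hTsub : T ⊆ Finset.range (p ^ k) := by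
    intro r hr
    obtain ⟨t, s, ht, hs, rfl⟩ := hmemT r hr
    have hs' : s < p := hSlt s hs
    have h1 : s + p * t < p * (t + 1) := by rw [Nat.mul_add, Nat.mul_one]; omega
    have h2 : p * (t + 1) ≤ p * p ^ (k - 1) := Nat.mul_le_mul_left p (by omega)
    have h3 : p * p ^ (k - 1) = p ^ k := by rw [mul_comm]; exact hMk
    rw [Finset.mem_range]
    omega
  have hTcard : T.card = p ^ (k - 1) * S.card := by
    rw [hT, Finset.card_image_of_injOn, Finset.card_product, Finset.card_range]
    intro q1 hq1 q2 hq2 heq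
    simp only [Finset.coe_product, Set.mem_prod, Finset.mem_coe, Finset.mem_range] at hq1 hq2
    have h1 : q1.2 < p := hSlt _ hq1.2
    have h2 : q2.2 < p := hSlt _ hq2.2
    simp only at heq
    have e2 : q1.2 = q2.2 := by
      have h3 := congrArg (· % p) heq
      simpa [Nat.add_mul_mod_self_left, Nat.mod_eq_of_lt h1, Nat.mod_eq_of_lt h2] using h3
    have e1 : q1.1 = q2.1 := by
      rw [e2] at heq
      have h4 : p * q1.1 = p * q2.1 := by omega
      exact Nat.eq_of_mul_eq_mul_left hpos h4
    exact Prod.ext e1 e2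
  have hTgood : good k (p ^ k) T := by
    refine ⟨hTsub, ?_⟩
    intro r hr r' hr' hne x hx
    rw [hzero_pk]
    by_contra hpx
    obtain ⟨t, s, ht, hs, rfl⟩ := hmemT r hr
    obtain ⟨t', s', ht', hs', rfl⟩ := hmemT r' hr'
    have hdvd : (p : ℤ) ∣ ((p ^ k : ℕ) : ℤ) := by
      push_cast
      exact dvd_pow_self _ hk0
    have hx' : ((s + p * t : ℕ) : ℤ) - ((s' + p * t' : ℕ) : ℤ) ≡ x ^ k [ZMOD (p : ℤ)] :=
      hx.of_dvd hdvd
    have step : ((s : ℤ) - s') ≡ ((s + p * t : ℕ) : ℤ) - ((s' + p * t' : ℕ) : ℤ) [ZMOD (p : ℤ)] := by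
      rw [Int.modEq_iff_dvd]
      push_cast
      exact ⟨(t : ℤ) - t', by ring⟩
    have hss : ((s : ℤ) - s') ≡ x ^ k [ZMOD (p : ℤ)] := step.trans hx'
    by_cases hEq : s = s'
    · subst hEq
      simp only [sub_self] at hss
      exact hpx (hprime.dvd_of_dvd_pow (Int.modEq_zero_iff_dvd.mp hss.symm))
    · have := hS.2 s hs s' hs' hEq x hss
      rw [hzero_p] at this
      exact hpx this
  have hlow : p ^ (k - 1) * rk k p ≤ rk k (p ^ k) := by
    have := le_rk hTgood
    rw [hTcard, hScard] at this
    exact this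
  -- ======== upper bound ========
  obtain ⟨U, hU, hUcard⟩ := exists_good k (p ^ k)
  have hUlt : ∀ r ∈ U, r < p ^ k := fun r hr => Finset.mem_range.mp (hU.1 hr)
  have hfiber : ∀ q : ℕ, ((U.filter (fun r => r / p = q)).card ≤ rk k p) := by
    intro q
    classical
    set F := U.filter (fun r => r / p = q) with hF
    have hmemF : ∀ r ∈ F, r ∈ U ∧ r / p = q := by
      intro r hr; simpa [hF] using (Finset.mem_filter.mp hr)
    set Sq := F.image (· % p) with hSq
    have hinj : Set.InjOn (· % p) F := by
      intro a ha b hb hab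
      obtain ⟨_, ha2⟩ := hmemF a ha
      obtain ⟨_, hb2⟩ := hmemF b hb
      have e1 : a = p * q + a % p := by rw [← ha2]; exact (Nat.div_add_mod a p).symm
      have e2 : b = p * q + b % p := by rw [← hb2]; exact (Nat.div_add_mod b p).symm
      have hab' : a % p = b % p := by simpa using hab
      omega
    have hcardq : Sq.card = F.card := Finset.card_image_of_injOn hinj
    have hgoodq : good k p Sq := by
      constructor
      · intro s hs
        rw [hSq, Finset.mem_image] at hs
        obtain ⟨r, hr, rfl⟩ := hs
        exact Finset.mem_range.mpr (Nat.mod_lt _ hpos)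
      · intro s hs s' hs' hne x hcong
        rw [hSq, Finset.mem_image] at hs hs'
        obtain ⟨r, hr, rfl⟩ := hs
        obtain ⟨r', hr', rfl⟩ := hs'
        obtain ⟨hrU, hrq⟩ := hmemF r hr
        obtain ⟨hrU', hrq'⟩ := hmemF r' hr'
        rw [hzero_p]
        by_contra hpx
        have hslt : r % p < p := Nat.mod_lt _ hpos
        have hslt' : r' % p < p := Nat.mod_lt _ hpos
        have hw : ¬ (p : ℤ) ∣ ((r % p : ℕ) : ℤ) - ((r' % p : ℕ) : ℤ) :=
          hsmall _ _ hslt hslt' hne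
        obtain ⟨y, hpy, hy⟩ := hensel_pow hp hk hpk hw hpx hcong
        have hrr' : ((r : ℤ) - r') = ((r % p : ℕ) : ℤ) - ((r' % p : ℕ) : ℤ) := by
          have h1 := Nat.div_add_mod r p
          have h2 := Nat.div_add_mod r' p
          have h3 : p * (r / p) = p * (r' / p) := by rw [hrq, hrq']
          push_cast
          omega
        have hrne : r ≠ r' := fun h => hne (by rw [h])
        have h5 := hU.2 r hrU r' hrU' hrne y (by rw [hrr']; exact hy)
        rw [hzero_pk] at h5
        exact hpy h5
    calc F.card = Sq.card := hcardq.symm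
    _ ≤ rk k p := le_rk hgoodq
  have hsum : U.card = ∑ q ∈ Finset.range (p ^ (k - 1)), (U.filter (fun r => r / p = q)).card := by
    apply Finset.card_eq_sum_card_fiberwise
    intro r hr
    simp only [Finset.mem_coe] at hr ⊢
    rw [Finset.mem_range, Nat.div_lt_iff_lt_mul hpos, hMk]
    exact hUlt r hr
  have hupp : rk k (p ^ k) ≤ p ^ (k - 1) * rk k p := by
    rw [← hUcard, hsum]
    calc (∑ q ∈ Finset.range (p ^ (k - 1)), (U.filter (fun r => r / p = q)).card)
        ≤ ∑ q ∈ Finset.range (p ^ (k - 1)), rk k p :=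
          Finset.sum_le_sum (fun q _ => hfiber q)
    _ = p ^ (k - 1) * rk k p := by rw [Finset.sum_const, Finset.card_range, smul_eq_mul]
  exact le_antisymm hupp hlow
end

section
/- Let m ≥ 2 be squarefree, k ≥ 2, and let R ⊆ {0,…,m−1} be a set such that differences of distinct elements of R are never k-th powers modulo m. Fix Y ∈ ℕ and let A be the set of integers of the form Σ_{0 ≤ i < Y} uᵢ mⁱ where uᵢ ∈ R whenever k ∣ i and uᵢ ∈ {0,…,m−1} otherwise. Then for all u, v ∈ A and all integers x, u − v = x^k implies x = 0. -/
/-!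
Let `j` be the first position where the digits of `u` and `v` differ, so that
`x ^ k = m ^ j * D` with `D ≡ u j - v j ≢ 0 (mod m)`. For squarefree `m`, `m ^ j ∣ x ^ k` implies
`m ^ ⌈j / k⌉ ∣ x` (compare exponents prime by prime). If `k ∤ j` this gives `m ^ (j + 1) ∣ x ^ k`,
so `m ∣ D`; hence `k ∣ j`, and then `D = y ^ k` with `y = x / m ^ (j / k)`. Both digits at position
`j` lie in `R`, so `y ^ k ≡ u j - v j` forces `m ∣ y`, hence `m ∣ D`: a contradiction.
-/

open Finset

-- The hypothesis `k * c < j + k` says `c ≤ ⌈j / k⌉`.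
theorem Nat.pow_dvd_of_pow_dvd_pow_of_squarefree {m n j k c : ℕ} (hm : Squarefree m)
    (h : m ^ j ∣ n ^ k) (hc : k * c < j + k) : m ^ c ∣ n := by
  rcases eq_or_ne n 0 with rfl | hn
  · exact dvd_zero _
  have hm0 : m ≠ 0 := hm.ne_zero
  have hfac := (Nat.factorization_le_iff_dvd (pow_ne_zero _ hm0) (pow_ne_zero _ hn)).2 h
  rw [← Nat.factorization_le_iff_dvd (pow_ne_zero _ hm0) hn]
  intro p
  have hp := hfac p
  simp only [Nat.factorization_pow, Finsupp.smul_apply, smul_eq_mul] at hp ⊢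
  rcases (hm.natFactorization_le_one p).eq_or_lt with h1 | h0
  · rw [h1, mul_one] at hp ⊢
    nlinarith
  · simp [Nat.lt_one_iff.1 h0]

theorem Int.pow_dvd_of_pow_dvd_pow_of_squarefree {m x : ℤ} {j k c : ℕ} (hm : Squarefree m)
    (h : m ^ j ∣ x ^ k) (hc : k * c < j + k) : m ^ c ∣ x := by
  rw [← Int.natAbs_dvd_natAbs] at h ⊢
  simp only [Int.natAbs_pow] at h ⊢
  exact Nat.pow_dvd_of_pow_dvd_pow_of_squarefree (Int.squarefree_natAbs.2 hm) h hc

theorem Squarefree.dvd_and_exists_pow_eq_of_pow_eq_pow_mul {m x D : ℤ} {j k : ℕ}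
    (hm : Squarefree m) (hk : 0 < k) (hx : x ^ k = m ^ j * D) (hD : ¬ m ∣ D) :
    k ∣ j ∧ ∃ y, y ^ k = D := by
  have hmx : m ^ j ∣ x ^ k := hx ▸ dvd_mul_right _ _
  by_cases hkj : k ∣ j
  · obtain ⟨q, rfl⟩ := hkj
    obtain ⟨y, rfl⟩ := Int.pow_dvd_of_pow_dvd_pow_of_squarefree (c := q) hm hmx (by omega)
    refine ⟨dvd_mul_right _ _, y, ?_⟩
    rw [mul_pow, ← pow_mul, mul_comm q] at hx
    exact mul_left_cancel₀ (pow_ne_zero _ hm.ne_zero) hx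
  · have hjk : 0 < j % k := Nat.pos_of_ne_zero fun h => hkj (Nat.dvd_of_mod_eq_zero h)
    have hdiv := Nat.div_add_mod j k
    have hmod := Nat.mod_lt j hk
    have hxm : m ^ (j / k + 1) ∣ x :=
      Int.pow_dvd_of_pow_dvd_pow_of_squarefree hm hmx (by rw [mul_add, mul_one]; omega)
    have hjx : m ^ j * m ∣ m ^ j * D := by
      rw [← pow_succ, ← hx]
      refine (pow_dvd_pow m ?_).trans (pow_mul m _ k ▸ pow_dvd_pow_of_dvd hxm k)
      rw [add_mul, one_mul, mul_comm]
      omega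
    exact absurd ((mul_dvd_mul_iff_left (pow_ne_zero _ hm.ne_zero)).1 hjx) hD

theorem exists_sum_range_eq_pow_mul {R : Type*} [CommRing R] (m : R) {d : ℕ → R} {j Y : ℕ}
    (hjY : j < Y) (hd : ∀ i < j, d i = 0) :
    ∃ D, ∑ i ∈ range Y, d i * m ^ i = m ^ j * D ∧ m ∣ D - d j := by
  induction Y, hjY using Nat.le_induction with
  | base =>
    refine ⟨d j, ?_, by simp⟩
    rw [sum_range_succ, sum_eq_zero fun i hi => by rw [hd i (mem_range.1 hi), zero_mul]]
    ring
  | succ Y hjY ih =>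
    obtain ⟨D, hD, hDj⟩ := ih
    refine ⟨D + d Y * m ^ (Y - j), ?_, ?_⟩
    · rw [sum_range_succ, hD, mul_add, mul_left_comm, ← pow_add, Nat.add_sub_cancel' (by omega)]
    · rw [add_sub_right_comm]
      exact dvd_add hDj (dvd_mul_of_dvd_right (dvd_pow_self m (by omega)) _)

theorem stmt_15_general (m k : ℕ) (hsf : Squarefree m) (hk : 2 ≤ k)
    (R : Finset ℕ)
    (hRdiff : ∀ r ∈ R, ∀ r' ∈ R, r ≠ r' → ∀ x : ℤ,
      ((r : ℤ) - (r' : ℤ) ≡ x ^ k [ZMOD (m : ℤ)]) → (m : ℤ) ∣ x)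
    (Y : ℕ) (u v : ℕ → ℕ)
    (hu : ∀ i < Y, u i < m ∧ (k ∣ i → u i ∈ R))
    (hv : ∀ i < Y, v i < m ∧ (k ∣ i → v i ∈ R)) :
    ∀ x : ℤ,
      (∑ i ∈ Finset.range Y, (u i : ℤ) * (m : ℤ) ^ i) -
        (∑ i ∈ Finset.range Y, (v i : ℤ) * (m : ℤ) ^ i) = x ^ k → x = 0 := by
  intro x hx
  set d : ℕ → ℤ := fun i => (u i : ℤ) - v i
  have hsum : ∑ i ∈ range Y, d i * (m : ℤ) ^ i = x ^ k := by
    simp only [d, sub_mul, sum_sub_distrib, hx]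
  by_cases hdiff : ∃ j, j < Y ∧ u j ≠ v j
  swap
  · push Not at hdiff
    refine pow_eq_zero_iff (n := k) (by omega) |>.1 (hsum ▸ sum_eq_zero fun i hi => ?_)
    simp [d, hdiff i (mem_range.1 hi)]
  exfalso
  obtain ⟨hjY, hj⟩ := Nat.find_spec hdiff
  set j := Nat.find hdiff
  obtain ⟨D, hxD, hDj⟩ := exists_sum_range_eq_pow_mul (m : ℤ) (d := d) hjY fun i hi => by
    simp [d, not_and_not_right.1 (Nat.find_min hdiff hi) (hi.trans hjY)]
  -- `D ≡ u j - v j`, and distinct digits `< m` are incongruent modulo `m`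
  have hD : ¬ (m : ℤ) ∣ D := fun hmD => hj <| (Nat.modEq_iff_dvd.2 <|
    (dvd_sub_right hmD).1 hDj).eq_of_lt_of_lt (hv _ hjY).1 (hu _ hjY).1 |>.symm
  obtain ⟨hkj, y, rfl⟩ := (Int.squarefree_natCast.2 hsf).dvd_and_exists_pow_eq_of_pow_eq_pow_mul
    (by omega) (hsum ▸ hxD : x ^ k = _) hD
  refine hD (dvd_pow (hRdiff _ ((hu _ hjY).2 hkj) _ ((hv _ hjY).2 hkj) hj y ?_) (by omega))
  exact Int.modEq_iff_dvd.2 hDj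

theorem stmt_15 (m k : ℕ) (hm : 2 ≤ m) (hsf : Squarefree m) (hk : 2 ≤ k)
    (R : Finset ℕ) (hR : R ⊆ Finset.range m)
    (hRdiff : ∀ r ∈ R, ∀ r' ∈ R, r ≠ r' → ∀ x : ℤ,
      ((r : ℤ) - (r' : ℤ) ≡ x ^ k [ZMOD (m : ℤ)]) → (m : ℤ) ∣ x)
    (Y : ℕ) (u v : ℕ → ℕ)
    (hu : ∀ i < Y, u i < m ∧ (k ∣ i → u i ∈ R))
    (hv : ∀ i < Y, v i < m ∧ (k ∣ i → v i ∈ R)) :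
    ∀ x : ℤ,
      (∑ i ∈ Finset.range Y, (u i : ℤ) * (m : ℤ) ^ i) -
        (∑ i ∈ Finset.range Y, (v i : ℤ) * (m : ℤ) ^ i) = x ^ k → x = 0 :=
  stmt_15_general m k hsf hk R hRdiff Y u v hu hv
end

section
/- Let m ≥ 2 be squarefree, k ≥ 2, and suppose R ⊆ {0,…,m−1} has the property that no difference of distinct elements of R is a k-th power modulo m. Then for every positive integer N there exists a set A ⊆ {1,…,N} with (A − A) ∩ {x^k : x ∈ ℤ} = {0} and |A| ≥ c(m) · N^γ, where γ = (k − 1 + log_m |R|)/k and c(m) > 0 depends only on m. -/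
def ruzsaSet (m k : ℕ) (R : Finset ℕ) : ℕ → Finset ℕ
  | 0 => {0}
  | Q + 1 => (R ×ˢ (Finset.range (m ^ (k - 1)) ×ˢ ruzsaSet m k R Q)).image
      fun p => p.1 + m * p.2.1 + m ^ k * p.2.2

lemma ruzsaSet_mem_succ {m k : ℕ} {R : Finset ℕ} {Q a : ℕ} :
    a ∈ ruzsaSet m k R (Q + 1) ↔
      ∃ r ∈ R, ∃ s < m ^ (k - 1), ∃ t ∈ ruzsaSet m k R Q, a = r + m * s + m ^ k * t := by
  simp only [ruzsaSet, Finset.mem_image, Finset.mem_product, Finset.mem_range, Prod.exists]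
  constructor
  · rintro ⟨r, s, t, ⟨hr, hs, ht⟩, rfl⟩
    exact ⟨r, hr, s, hs, t, ht, rfl⟩
  · rintro ⟨r, hr, s, hs, t, ht, rfl⟩
    exact ⟨r, s, t, ⟨hr, hs, ht⟩, rfl⟩

lemma ruzsaSet_lt {m k : ℕ} (hm : 2 ≤ m) (hk : 1 ≤ k) {R : Finset ℕ}
    (hR : R ⊆ Finset.range m) : ∀ Q, ∀ a ∈ ruzsaSet m k R Q, a < m ^ (k * Q) := by
  intro Q
  induction Q with
  | zero => intro a ha; simp [ruzsaSet] at ha; simp [ha]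
  | succ Q ih =>
    intro a ha
    rw [ruzsaSet_mem_succ] at ha
    obtain ⟨r, hr, s, hs, t, ht, rfl⟩ := ha
    have hrm : r < m := Finset.mem_range.mp (hR hr)
    have htQ : t < m ^ (k * Q) := ih t ht
    have hmk : m * m ^ (k - 1) = m ^ k := by
      rw [← pow_succ']
      congr 1
      omega
    have h1 : r + m * s < m ^ k := by
      calc r + m * s < m + m * s := by omega
        _ = m * (s + 1) := by ring
        _ ≤ m * m ^ (k - 1) := by
            exact Nat.mul_le_mul_left m (by omega)
        _ = m ^ k := hmk
    calc r + m * s + m ^ k * t < m ^ k * (t + 1) := by rw [Nat.mul_succ]; omega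
      _ ≤ m ^ k * m ^ (k * Q) := Nat.mul_le_mul_left _ (by omega)
      _ = m ^ (k * (Q + 1)) := by rw [← pow_add]; ring_nf

lemma add_mul_inj {b r s r' s' : ℕ} (h1 : r < b) (h2 : r' < b)
    (h : r + b * s = r' + b * s') : r = r' ∧ s = s' := by
  have e1 : (r + b * s) % b = r := by
    rw [Nat.add_mul_mod_self_left, Nat.mod_eq_of_lt h1]
  have e2 : (r' + b * s') % b = r' := by
    rw [Nat.add_mul_mod_self_left, Nat.mod_eq_of_lt h2]
  have hr : r = r' := by rw [← e1, ← e2, h]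
  subst hr
  have : b * s = b * s' := by omega
  exact ⟨rfl, Nat.eq_of_mul_eq_mul_left (by omega) this⟩

lemma ruzsaSet_card {m k : ℕ} (hm : 2 ≤ m) (hk : 1 ≤ k) {R : Finset ℕ}
    (hR : R ⊆ Finset.range m) : ∀ Q, (ruzsaSet m k R Q).card = (R.card * m ^ (k - 1)) ^ Q := by
  intro Q
  induction Q with
  | zero => simp [ruzsaSet]
  | succ Q ih =>
    have hinj : Set.InjOn (fun p : ℕ × ℕ × ℕ => p.1 + m * p.2.1 + m ^ k * p.2.2)
        ↑(R ×ˢ (Finset.range (m ^ (k - 1)) ×ˢ ruzsaSet m k R Q)) := by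
      rintro ⟨r, s, t⟩ hp ⟨r', s', t'⟩ hq hpq
      simp only [Finset.coe_product, Set.mem_prod, Finset.mem_coe, Finset.mem_range] at hp hq
      simp only at hpq
      have hrm : r < m := Finset.mem_range.mp (hR hp.1)
      have hrm' : r' < m := Finset.mem_range.mp (hR hq.1)
      have hmk : m ^ k = m * m ^ (k - 1) := by
        rw [← pow_succ']; congr 1; omega
      have heq : r + m * (s + m ^ (k - 1) * t) = r' + m * (s' + m ^ (k - 1) * t') := by
        rw [Nat.mul_add, Nat.mul_add, ← Nat.mul_assoc, ← Nat.mul_assoc, ← hmk] at *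
        omega
      obtain ⟨h1, h2⟩ := add_mul_inj hrm hrm' heq
      obtain ⟨h3, h4⟩ := add_mul_inj hp.2.1 hq.2.1 h2
      simp [h1, h3, h4]
    rw [show ruzsaSet m k R (Q + 1) = (R ×ˢ (Finset.range (m ^ (k - 1)) ×ˢ ruzsaSet m k R Q)).image
      (fun p => p.1 + m * p.2.1 + m ^ k * p.2.2) from rfl,
      Finset.card_image_of_injOn hinj, Finset.card_product, Finset.card_product,
      Finset.card_range, ih]
    ring

lemma ruzsaSet_diff {m k : ℕ} (hm : 2 ≤ m) (hsf : Squarefree m) (hk : 2 ≤ k)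
    {R : Finset ℕ} (hR : R ⊆ Finset.range m)
    (hRdiff : ∀ r ∈ R, ∀ r' ∈ R, r ≠ r' → ∀ x : ℤ,
      ¬ ((r : ℤ) - (r' : ℤ) ≡ x ^ k [ZMOD (m : ℤ)])) :
    ∀ Q, ∀ a ∈ ruzsaSet m k R Q, ∀ a' ∈ ruzsaSet m k R Q, ∀ x : ℤ,
      (a : ℤ) - a' = x ^ k → a = a' := by
  obtain ⟨k', rfl⟩ : ∃ k', k = k' + 1 := ⟨k - 1, by omega⟩
  have hk' : 1 ≤ k' := by omega
  have hm0 : (m : ℤ) ≠ 0 := by positivity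
  have hmsf : Squarefree (m : ℤ) := Int.squarefree_natCast.mpr hsf
  intro Q
  induction Q with
  | zero =>
    intro a ha a' ha' x h
    simp [ruzsaSet] at ha ha'
    omega
  | succ Q ih =>
    intro a ha a' ha' x hx
    rw [ruzsaSet_mem_succ] at ha ha'
    obtain ⟨r, hr, s, hs, t, ht, rfl⟩ := ha
    obtain ⟨r', hr', s', hs', t', ht', rfl⟩ := ha'
    simp only [Nat.add_sub_cancel] at hs hs'
    by_cases hrr : r = r'
    · subst hrr
      have h1 : x ^ (k' + 1) = (m : ℤ) * (((s:ℤ) - s') + (m:ℤ)^k' * ((t:ℤ) - t')) := by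
        rw [← hx]; push_cast; ring
      have hmx : (m : ℤ) ∣ x :=
        (hmsf.dvd_pow_iff_dvd (by omega)).mp ⟨_, h1⟩
      obtain ⟨y, rfl⟩ := hmx
      have h2 : ((s:ℤ) - s') + (m:ℤ)^k' * ((t:ℤ) - t') = (m:ℤ)^k' * y ^ (k' + 1) := by
        apply mul_left_cancel₀ hm0
        rw [← h1]; ring
      have h3 : (s:ℤ) - s' = (m:ℤ)^k' * (y ^ (k' + 1) - ((t:ℤ) - t')) := by
        linear_combination h2
      have hsZ : (s : ℤ) < (m:ℤ)^k' := by exact_mod_cast hs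
      have hsZ' : (s' : ℤ) < (m:ℤ)^k' := by exact_mod_cast hs'
      have hmk'pos : (0:ℤ) < (m:ℤ)^k' := by positivity
      have hw : y ^ (k' + 1) - ((t:ℤ) - t') = 0 := by
        by_contra hw
        have h5 : (m:ℤ)^k' ≤ |(s:ℤ) - s'| := by
          rw [h3, abs_mul, abs_of_pos hmk'pos]
          nlinarith [Int.add_one_le_iff.mpr (abs_pos.mpr hw)]
        have h6 : |(s:ℤ) - s'| < (m:ℤ)^k' := by
          rw [abs_sub_lt_iff]
          constructor <;> omega
        linarith
      have hss : s = s' := by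
        have h9 : (s:ℤ) - s' = 0 := by rw [h3, hw, mul_zero]
        omega
      have htt : t = t' := by
        refine ih t ht t' ht' y ?_
        omega
      subst hss; subst htt; rfl
    · exfalso
      refine hRdiff r hr r' hr' hrr x ?_
      refine Int.modEq_iff_dvd.mpr ?_
      exact ⟨((s:ℤ) - s') + (m:ℤ)^k' * ((t:ℤ) - t'), by rw [← hx]; push_cast; ring⟩

theorem stmt_16 (m k : ℕ) (hm : 2 ≤ m) (hsf : Squarefree m) (hk : 2 ≤ k)
    (R : Finset ℕ) (hR : R ⊆ Finset.range m)
    (hRdiff : ∀ r ∈ R, ∀ r' ∈ R, r ≠ r' → ∀ x : ℤ,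
      ¬ ((r : ℤ) - (r' : ℤ) ≡ x ^ k [ZMOD (m : ℤ)])) :
    ∃ c : ℝ, 0 < c ∧ ∀ N : ℕ, 0 < N → ∃ A : Finset ℕ,
      A ⊆ Finset.Icc 1 N ∧
      (∀ a ∈ A, ∀ a' ∈ A, ∀ x : ℤ, (a : ℤ) - (a' : ℤ) = x ^ k →
        (a : ℤ) - (a' : ℤ) = 0) ∧
      c * (N : ℝ) ^ (((k : ℝ) - 1 + Real.logb m R.card) / k) ≤ A.card := by
  have hm1R : (1:ℝ) < (m:ℝ) := by exact_mod_cast (by omega : 1 < m)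
  have hmpos : (0:ℝ) < (m:ℝ) := by linarith
  obtain ⟨R', hR'sub, hR'diff, hR'ne, hcard⟩ :
      ∃ R' : Finset ℕ, R' ⊆ Finset.range m ∧
        (∀ r ∈ R', ∀ r' ∈ R', r ≠ r' → ∀ x : ℤ,
          ¬ ((r:ℤ) - (r':ℤ) ≡ x ^ k [ZMOD (m:ℤ)])) ∧
        R'.Nonempty ∧ (m:ℝ) ^ Real.logb m R.card = (R'.card : ℝ) := by
    rcases R.eq_empty_or_nonempty with h | h
    · refine ⟨{0}, by simp [Finset.singleton_subset_iff]; omega, ?_, ⟨0, by simp⟩, ?_⟩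
      · intro r hr r' hr' hne
        simp only [Finset.mem_singleton] at hr hr'
        omega
      · simp [h, Real.logb]
    · refine ⟨R, hR, hRdiff, h, ?_⟩
      rw [Real.rpow_logb hmpos (by linarith) ?_]
      exact_mod_cast Finset.card_pos.mpr h
  set D := R'.card with hD
  have hDpos : 0 < D := Finset.card_pos.mpr hR'ne
  have hDle : D ≤ m := by
    have := Finset.card_le_card hR'sub
    simpa using this
  set γ : ℝ := ((k : ℝ) - 1 + Real.logb m R.card) / k with hγ
  have hk0R : (k:ℝ) ≠ 0 := by positivity
  have hlog0 : 0 ≤ Real.logb m R.card := by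
    by_contra hcon
    push_neg at hcon
    have h1 := Real.rpow_lt_one_of_one_lt_of_neg hm1R hcon
    rw [hcard] at h1
    have : (1:ℝ) ≤ (D:ℝ) := by exact_mod_cast hDpos
    linarith
  have hγ0 : 0 ≤ γ := by
    apply div_nonneg _ (by positivity)
    have : (2:ℝ) ≤ (k:ℝ) := by exact_mod_cast hk
    linarith
  have hbase : (m:ℝ) ^ (γ * k) = (m:ℝ) ^ (k-1) * D := by
    have h1 : γ * k = ((k:ℝ) - 1) + Real.logb m R.card := by
      rw [hγ, div_mul_cancel₀ _ hk0R]
    rw [h1, Real.rpow_add hmpos, hcard]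
    congr 1
    rw [show (k:ℝ) - 1 = ((k - 1 : ℕ) : ℝ) by push_cast [Nat.cast_sub (by omega : 1 ≤ k)]; ring]
    exact Real.rpow_natCast _ _
  refine ⟨((m:ℝ)^k)⁻¹, by positivity, ?_⟩
  intro N hN
  set Q := Nat.log (m ^ k) N with hQ
  have hB : 1 < m ^ k := Nat.one_lt_pow (by omega) (by omega)
  have hQ1 : (m ^ k) ^ Q ≤ N := Nat.pow_log_le_self _ (by omega)
  have hQ2 : N < (m ^ k) ^ (Q + 1) := Nat.lt_pow_succ_log_self hB N
  refine ⟨(ruzsaSet m k R' Q).image (· + 1), ?_, ?_, ?_⟩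
  · intro b hb
    obtain ⟨a, ha, rfl⟩ := Finset.mem_image.mp hb
    have := ruzsaSet_lt hm (by omega) hR'sub Q a ha
    rw [pow_mul] at this
    exact Finset.mem_Icc.mpr ⟨by omega, by omega⟩
  · intro b hb b' hb' x hx
    obtain ⟨a, ha, rfl⟩ := Finset.mem_image.mp hb
    obtain ⟨a', ha', rfl⟩ := Finset.mem_image.mp hb'
    have hxx : (a : ℤ) - a' = x ^ k := by push_cast at hx ⊢; linarith
    have := ruzsaSet_diff hm hsf hk hR'sub hR'diff Q a ha a' ha' x hxx
    subst this
    ring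
  · have hcardA : ((ruzsaSet m k R' Q).image (· + 1)).card = (D * m ^ (k-1)) ^ Q := by
      rw [Finset.card_image_of_injective _ (fun a b h => by omega),
        ruzsaSet_card hm (by omega) hR'sub]
    rw [hcardA]
    have hNle : (N : ℝ) ≤ ((m:ℝ) ^ (k * (Q+1))) := by
      have : (N:ℝ) ≤ (((m^k)^(Q+1) : ℕ) : ℝ) := by exact_mod_cast hQ2.le
      calc (N:ℝ) ≤ (((m^k)^(Q+1) : ℕ) : ℝ) := this
        _ = (m:ℝ) ^ (k * (Q+1)) := by push_cast [← pow_mul]; ring_nf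
    have step1 : (N:ℝ) ^ γ ≤ ((m:ℝ) ^ (k * (Q+1))) ^ γ :=
      Real.rpow_le_rpow (by positivity) hNle hγ0
    have step2 : ((m:ℝ) ^ (k * (Q+1))) ^ γ = ((m:ℝ)^(k-1) * D) ^ Q * ((m:ℝ)^(k-1) * D) := by
      rw [← Real.rpow_natCast (m:ℝ) (k * (Q+1)), ← Real.rpow_mul hmpos.le]
      have he : ((k * (Q+1) : ℕ) : ℝ) * γ = (γ * k) * Q + γ * k := by push_cast; ring
      rw [he, Real.rpow_add hmpos, Real.rpow_mul hmpos.le, Real.rpow_natCast, hbase]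
    have step3 : ((m:ℝ)^(k-1) * D) ≤ (m:ℝ)^k := by
      calc ((m:ℝ)^(k-1) * D) ≤ (m:ℝ)^(k-1) * m := by
            have : (D:ℝ) ≤ (m:ℝ) := by exact_mod_cast hDle
            nlinarith [pow_pos hmpos (k-1)]
        _ = (m:ℝ)^k := by rw [← pow_succ]; congr 1; omega
    have hfinal : ((m:ℝ)^k)⁻¹ * (N:ℝ) ^ γ ≤ ((m:ℝ)^(k-1) * D) ^ Q := by
      rw [inv_mul_le_iff₀ (by positivity)]
      calc (N:ℝ) ^ γ ≤ ((m:ℝ)^(k-1) * D) ^ Q * ((m:ℝ)^(k-1) * D) := by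
            rw [← step2]; exact step1
        _ ≤ ((m:ℝ)^(k-1) * D) ^ Q * (m:ℝ)^k := by
            apply mul_le_mul_of_nonneg_left step3 (by positivity)
        _ = (m:ℝ)^k * ((m:ℝ)^(k-1) * D) ^ Q := by ring
    calc ((m:ℝ)^k)⁻¹ * (N:ℝ) ^ γ ≤ ((m:ℝ)^(k-1) * D) ^ Q := hfinal
      _ = (((D * m ^ (k-1)) ^ Q : ℕ) : ℝ) := by push_cast; ring
end

section
/- Let m ≥ 2 be an integer and F ∈ ℤ[x₁,…,x_n] a homogeneous polynomial of degree k ≥ 2 such that every root of F modulo m^k is congruent to the zero vector modulo m. Let R' ⊆ {0,…,m^k − 1} be a set whose differences between distinct elements are never in F(ℤⁿ) modulo m^k. Then for every positive integer N there exists A ⊆ {1,…,N} with (A − A) ∩ F(ℤⁿ) = {0} and |A| ≥ c(m,k) · N^{(log_m |R'|)/k} for some constant c(m,k) > 0. -/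
open MvPolynomial Finset

/-! Let `M = m ^ k` and `d = Nat.log M N`, and take for `A` the numbers with `d` base-`M` digits,
all in `R'`, shifted by one into `[1, N]`; there are `|R'| ^ d ≥ N ^ (log_M |R'|) / M` of them.
If `a - a' = F z` for two of them, reducing modulo `M` forces their last digits to agree; then
`M ∣ F z`, so `z = m • w` and `F z = M * F w` by homogeneity, and `(a - a') / M = F w` is the same
situation with one digit fewer. -/

lemma MvPolynomial.IsHomogeneous.eval_smul {R σ : Type*} [CommSemiring R]
    {φ : MvPolynomial σ R} {n : ℕ} (hφ : φ.IsHomogeneous n) (c : R) (x : σ → R) :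
    eval (c • x) φ = c ^ n * eval x φ := by
  rw [eval_eq, eval_eq, Finset.mul_sum]
  refine Finset.sum_congr rfl fun d hd => ?_
  have hdeg : ∑ i ∈ d.support, d i = n := by
    simpa [Finsupp.weight_apply, Finsupp.sum] using hφ (mem_support_iff.mp hd)
  simp only [Pi.smul_apply, smul_eq_mul, mul_pow, Finset.prod_mul_distrib,
    Finset.prod_pow_eq_pow_sum, hdeg]
  ring

lemma mem_range_eval_of_pow_mul_mem {R σ : Type*} [CommRing R] [IsDomain R]
    {F : MvPolynomial σ R} {k : ℕ} (hF : F.IsHomogeneous k) {m : R} (hm : m ≠ 0)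
    (hroot : ∀ x : σ → R, m ^ k ∣ eval x F → ∀ i, m ∣ x i) {t : R}
    (ht : m ^ k * t ∈ Set.range fun x => eval x F) : t ∈ Set.range fun x => eval x F := by
  obtain ⟨x, hx⟩ := ht
  choose y hy using hroot x ⟨t, hx⟩
  have hxy : x = m • y := funext hy
  refine ⟨y, mul_left_cancel₀ (pow_ne_zero k hm) ?_⟩
  rw [← hF.eval_smul, ← hxy]
  exact hx

theorem Nat.ofDigits_eq_of_sub_mem {S : Set ℤ} {b : ℤ} (hS : ∀ t, b * t ∈ S → t ∈ S)
    {R : Set ℕ} (hR : ∀ r ∈ R, ∀ s ∈ R, ∀ t ∈ S, (r : ℤ) - s ≡ t [ZMOD b] → r = s) :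
    ∀ {L L' : List ℕ}, L.length = L'.length → (∀ x ∈ L, x ∈ R) → (∀ x ∈ L', x ∈ R) →
      ofDigits b L - ofDigits b L' ∈ S → L = L'
  | [], [], _, _, _, _ => rfl
  | r :: L, s :: L', hlen, hL, hL', hS' => by
    simp only [ofDigits, List.length_cons, add_left_inj, List.forall_mem_cons] at hS' hlen hL hL'
    have hrs : r = s := hR r hL.1 s hL'.1 _ hS' <| Int.modEq_iff_dvd.mpr
      ⟨ofDigits b L - ofDigits b L', by ring⟩
    subst hrs
    have hdiff : b * (ofDigits b L - ofDigits b L') ∈ S := by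
      convert hS' using 1; ring
    rw [Nat.ofDigits_eq_of_sub_mem hS hR hlen hL.2 hL'.2 (hS _ hdiff)]

def digitNumbers (b d : ℕ) (R : Finset ℕ) : Finset ℕ :=
  (Fintype.piFinset fun _ : Fin d => R).image fun f => Nat.ofDigits b (List.ofFn f)

section digitNumbers

variable {b d : ℕ} {R : Finset ℕ}

lemma exists_ofDigits_of_mem_digitNumbers {a : ℕ} (ha : a ∈ digitNumbers b d R) :
    ∃ L : List ℕ, L.length = d ∧ (∀ x ∈ L, x ∈ R) ∧ Nat.ofDigits b L = a := by
  obtain ⟨f, hf, rfl⟩ := mem_image.mp ha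
  refine ⟨List.ofFn f, List.length_ofFn, fun x hx => ?_, rfl⟩
  obtain ⟨i, rfl⟩ := List.mem_ofFn.mp hx
  exact Fintype.mem_piFinset.mp hf i

lemma lt_of_mem_digitNumbers (hb : 1 < b) (hR : ∀ r ∈ R, r < b) {a : ℕ}
    (ha : a ∈ digitNumbers b d R) : a < b ^ d := by
  obtain ⟨L, rfl, hL, rfl⟩ := exists_ofDigits_of_mem_digitNumbers ha
  exact Nat.ofDigits_lt_base_pow_length hb fun x hx => hR x (hL x hx)

lemma image_succ_digitNumbers_log_subset_Icc (hb : 1 < b) (hR : ∀ r ∈ R, r < b) {N : ℕ}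
    (hN : 0 < N) : (digitNumbers b (Nat.log b N) R).image (· + 1) ⊆ Icc 1 N := by
  intro _ hmem
  obtain ⟨a, ha, rfl⟩ := mem_image.mp hmem
  have h1 : a < b ^ Nat.log b N := lt_of_mem_digitNumbers hb hR ha
  have h2 : b ^ Nat.log b N ≤ N := Nat.pow_log_le_self b hN.ne'
  simp only [mem_Icc]
  omega

lemma card_digitNumbers (hb : 1 < b) (hR : ∀ r ∈ R, r < b) :
    #(digitNumbers b d R) = #R ^ d := by
  rw [digitNumbers, card_image_of_injOn, Fintype.card_piFinset, prod_const, card_univ,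
    Fintype.card_fin]
  intro f hf g hg hfg
  have hdigit : ∀ h ∈ Fintype.piFinset (fun _ : Fin d => R), ∀ x ∈ List.ofFn h, x < b := by
    intro h hh x hx
    obtain ⟨i, rfl⟩ := List.mem_ofFn.mp hx
    exact hR _ (Fintype.mem_piFinset.mp hh i)
  exact List.ofFn_injective <| Nat.ofDigits_inj_of_len_eq hb (by simp) (hdigit f hf)
    (hdigit g hg) hfg

lemma eq_of_sub_mem_of_mem_digitNumbers {S : Set ℤ} (hS : ∀ t, (b : ℤ) * t ∈ S → t ∈ S)
    (hR : ∀ r ∈ R, ∀ s ∈ R, ∀ t ∈ S, (r : ℤ) - s ≡ t [ZMOD b] → r = s) {a a' : ℕ}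
    (ha : a ∈ digitNumbers b d R) (ha' : a' ∈ digitNumbers b d R) (h : (a : ℤ) - a' ∈ S) :
    a = a' := by
  obtain ⟨L, hL, hLR, rfl⟩ := exists_ofDigits_of_mem_digitNumbers ha
  obtain ⟨L', hL', hLR', rfl⟩ := exists_ofDigits_of_mem_digitNumbers ha'
  push_cast [Nat.coe_ofDigits] at h
  rw [Nat.ofDigits_eq_of_sub_mem hS (R := R) hR (hL.trans hL'.symm) hLR hLR' h]

end digitNumbers

lemma eq_of_sub_eq_eval_of_mem_digitNumbers {σ : Type*} {m k d : ℕ} {F : MvPolynomial σ ℤ}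
    (hF : F.IsHomogeneous k) (hm : m ≠ 0)
    (hroot : ∀ x : σ → ℤ, (m : ℤ) ^ k ∣ eval x F → ∀ i, (m : ℤ) ∣ x i) {R : Finset ℕ}
    (hR : ∀ r ∈ R, ∀ s ∈ R, ∀ z : σ → ℤ, (r : ℤ) - s ≡ eval z F [ZMOD (m : ℤ) ^ k] → r = s)
    {a a' : ℕ} (ha : a ∈ digitNumbers (m ^ k) d R) (ha' : a' ∈ digitNumbers (m ^ k) d R)
    {z : σ → ℤ} (h : (a : ℤ) - a' = eval z F) : a = a' := by
  refine eq_of_sub_mem_of_mem_digitNumbers (S := Set.range fun x => eval x F) (fun t ht => ?_) ?_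
    ha ha' ⟨z, h.symm⟩
  · exact mem_range_eval_of_pow_mul_mem hF (Nat.cast_ne_zero.mpr hm) hroot (by exact_mod_cast ht)
  · rintro r hr s hs _ ⟨z, rfl⟩ hrs
    exact hR r hr s hs z (by exact_mod_cast hrs)

lemma rpow_logb_div_le_pow_log {b r : ℕ} (hb : 1 < b) (hr : 0 < r) (hrb : r ≤ b) (N : ℕ) :
    (N : ℝ) ^ Real.logb b r / b ≤ (r : ℝ) ^ Nat.log b N := by
  have hb' : (1 : ℝ) < b := by exact_mod_cast hb
  have hα : 0 ≤ Real.logb b r := Real.logb_nonneg hb' (by exact_mod_cast hr)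
  have hN : (N : ℝ) ≤ (b : ℝ) ^ (Nat.log b N + 1) := by
    exact_mod_cast (Nat.lt_pow_succ_log_self hb N).le
  calc (N : ℝ) ^ Real.logb b r / b
      ≤ ((b : ℝ) ^ (Nat.log b N + 1)) ^ Real.logb b r / b := by gcongr
    _ = (r : ℝ) ^ Nat.log b N * (r / b) := by
      rw [← Real.rpow_pow_comm (by positivity), Real.rpow_logb (by positivity) hb'.ne'
        (by exact_mod_cast hr), pow_succ]
      ring
    _ ≤ (r : ℝ) ^ Nat.log b N := by
      refine mul_le_of_le_one_right (by positivity) ((div_le_one (by positivity)).mpr ?_)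
      exact_mod_cast hrb

lemma rpow_logb_div_le_card_digitNumbers_log {b : ℕ} {R : Finset ℕ} (hb : 1 < b)
    (hR : ∀ r ∈ R, r < b) (hR0 : 0 < #R) (N : ℕ) :
    (N : ℝ) ^ Real.logb b #R / b ≤ #(digitNumbers b (Nat.log b N) R) := by
  have hRb : #R ≤ b := by simpa using card_le_card fun r hr => mem_range.mpr (hR r hr)
  rw [card_digitNumbers hb hR, Nat.cast_pow]
  exact rpow_logb_div_le_pow_log hb hR0 hRb N

theorem stmt_17_general (m k n : ℕ)
    (F : MvPolynomial (Fin n) ℤ) (hF : F.IsHomogeneous k)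
    (hroot : ∀ x : Fin n → ℤ,
      ((m : ℤ) ^ k ∣ MvPolynomial.eval x F) → ∀ i, (m : ℤ) ∣ x i)
    (R' : Finset ℕ) (hR' : R' ⊆ Finset.range (m ^ k))
    (hdiff : ∀ r ∈ R', ∀ r' ∈ R', r ≠ r' → ∀ z : Fin n → ℤ,
      ¬ ((r : ℤ) - (r' : ℤ) ≡ MvPolynomial.eval z F [ZMOD (m : ℤ) ^ k])) :
    ∃ c : ℝ, 0 < c ∧ ∀ N : ℕ, 0 < N → ∃ A : Finset ℕ,
      A ⊆ Finset.Icc 1 N ∧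
      (∀ a ∈ A, ∀ a' ∈ A, ∀ z : Fin n → ℤ,
        (a : ℤ) - (a' : ℤ) = MvPolynomial.eval z F → (a : ℤ) - (a' : ℤ) = 0) ∧
      c * (N : ℝ) ^ (Real.logb m R'.card / k) ≤ A.card := by
  obtain hsmall | hlarge := le_or_gt #R' 1
  · refine ⟨1, one_pos, fun N hN => ⟨{1}, by simpa using Nat.one_le_iff_ne_zero.mpr hN.ne',
      by simp, ?_⟩⟩
    have hlog : Real.logb m #R' = 0 := by interval_cases #R' <;> simp
    simp [hlog]
  set M := m ^ k with hM
  have hdigit : ∀ r ∈ R', r < M := fun r hr => mem_range.mp (hR' hr)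
  have hM1 : 1 < M := hlarge.trans_le (by simpa using card_le_card hR')
  have hm : m ≠ 0 := by
    rintro rfl
    rcases k with _ | k <;> simp [hM] at hM1
  have hresidues : ∀ r ∈ R', ∀ s ∈ R', ∀ z : Fin n → ℤ,
      (r : ℤ) - s ≡ eval z F [ZMOD (m : ℤ) ^ k] → r = s :=
    fun r hr s hs z => not_imp_not.mp (hdiff r hr s hs · z)
  have hexp : Real.logb m #R' / k = Real.logb M #R' := by
    rw [Real.logb, Real.logb, hM, Nat.cast_pow, Real.log_pow, div_div, mul_comm]
  refine ⟨(M : ℝ)⁻¹, by positivity, fun N hN => ⟨_,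
    image_succ_digitNumbers_log_subset_Icc hM1 hdigit hN, ?_, ?_⟩⟩
  · rintro _ hmem _ hmem' z hz
    obtain ⟨a, ha, rfl⟩ := mem_image.mp hmem
    obtain ⟨a', ha', rfl⟩ := mem_image.mp hmem'
    have := eq_of_sub_eq_eval_of_mem_digitNumbers hF hm hroot hresidues ha ha'
      (z := z) (by push_cast at hz; linarith)
    simp [this]
  · rw [card_image_of_injective _ (add_left_injective 1), hexp, ← div_eq_inv_mul]
    exact rpow_logb_div_le_card_digitNumbers_log hM1 hdigit (by omega) N

theorem stmt_17 (m k n : ℕ) (hm : 2 ≤ m) (hk : 2 ≤ k)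
    (F : MvPolynomial (Fin n) ℤ) (hF : F.IsHomogeneous k)
    (hroot : ∀ x : Fin n → ℤ,
      ((m : ℤ) ^ k ∣ MvPolynomial.eval x F) → ∀ i, (m : ℤ) ∣ x i)
    (R' : Finset ℕ) (hR' : R' ⊆ Finset.range (m ^ k))
    (hdiff : ∀ r ∈ R', ∀ r' ∈ R', r ≠ r' → ∀ z : Fin n → ℤ,
      ¬ ((r : ℤ) - (r' : ℤ) ≡ MvPolynomial.eval z F [ZMOD (m : ℤ) ^ k])) :
    ∃ c : ℝ, 0 < c ∧ ∀ N : ℕ, 0 < N → ∃ A : Finset ℕ,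
      A ⊆ Finset.Icc 1 N ∧
      (∀ a ∈ A, ∀ a' ∈ A, ∀ z : Fin n → ℤ,
        (a : ℤ) - (a' : ℤ) = MvPolynomial.eval z F → (a : ℤ) - (a' : ℤ) = 0) ∧
      c * (N : ℝ) ^ (Real.logb m R'.card / k) ≤ A.card :=
  stmt_17_general m k n F hF hroot R' hR' hdiff
end

section
/- For every positive integer N there exists a set A ⊆ {1,…,N} with |A| ≥ c·N^{1/2} for an absolute constant c > 0, such that no difference of two distinct elements of A is a sum of two squares; i.e., (A − A) ∩ {x² + y² : x, y ∈ ℤ} = {0}. -/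
/-!
Let `spread m` be the number whose base-9 digits are three times the base-3 digits of `m`; the set
is `{spread m + 1 : m < 3^t}` with `9^t ≤ N < 9^(t+1)`. If `spread m - spread m'` is a sum of two
squares `x² + y²`, it is divisible by `3`, hence `3 ∣ x`, `3 ∣ y` and `9` divides it. Since digits
in `{0, 3, 6}` differ by `0` or `±3, ±6 (mod 9)`, the lowest digits of `m` and `m'` agree, and the
difference is `9` times the same difference for `m / 3` and `m' / 3`, which is `(x/3)² + (y/3)²`.
Induction gives `m = m'`.
-/

theorem Int.dvd_of_dvd_sq_add_sq {p : ℕ} [Fact p.Prime] (hp : p % 4 = 3) {x y : ℤ}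
    (h : (p : ℤ) ∣ x ^ 2 + y ^ 2) : (p : ℤ) ∣ y := by
  by_contra hy
  rw [← ZMod.intCast_zmod_eq_zero_iff_dvd] at h hy
  push_cast at h
  exact ZMod.mod_four_ne_three_of_sq_eq_neg_sq' hy (eq_neg_of_add_eq_zero_left h) hp

theorem Int.exists_sq_add_sq_eq_of_dvd_sq_add_sq {p : ℕ} [Fact p.Prime] (hp : p % 4 = 3)
    {x y : ℤ} (h : (p : ℤ) ∣ x ^ 2 + y ^ 2) :
    ∃ u v : ℤ, x ^ 2 + y ^ 2 = p ^ 2 * (u ^ 2 + v ^ 2) := by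
  obtain ⟨v, rfl⟩ := Int.dvd_of_dvd_sq_add_sq hp h
  obtain ⟨u, rfl⟩ := Int.dvd_of_dvd_sq_add_sq hp (add_comm (x ^ 2) _ ▸ h)
  exact ⟨u, v, by ring⟩

def spread (m : ℕ) : ℕ :=
  Nat.ofDigits 9 ((Nat.digits 3 m).map (3 * ·))

theorem spread_eq (m : ℕ) : spread m = 3 * (m % 3) + 9 * spread (m / 3) := by
  rcases m.eq_zero_or_pos with rfl | hm
  · simp [spread]
  · rw [spread, Nat.digits_def' (by norm_num) hm, List.map_cons, Nat.ofDigits_cons, spread]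

theorem spread_lt {t m : ℕ} (hm : m < 3 ^ t) : spread m < 9 ^ t := by
  induction t generalizing m with
  | zero => simp_all [spread]
  | succ t ih =>
    have := ih (m := m / 3) (by omega)
    rw [spread_eq, pow_succ]
    omega

theorem eq_of_spread_sub_spread_eq_sq_add_sq {m m' : ℕ} {x y : ℤ}
    (h : (spread m : ℤ) - spread m' = x ^ 2 + y ^ 2) : m = m' := by
  by_cases h0 : m = 0 ∧ m' = 0
  · omega
  have hsplit : (spread m : ℤ) - spread m' =
      3 * ((m % 3 : ℕ) - (m' % 3 : ℕ) : ℤ) + 9 * ((spread (m / 3) : ℤ) - spread (m' / 3)) := by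
    rw [spread_eq m, spread_eq m']
    push_cast
    ring
  obtain ⟨u, v, huv⟩ :=
    Int.exists_sq_add_sq_eq_of_dvd_sq_add_sq (p := 3) (by norm_num) (x := x) (y := y)
      (by rw [← h, hsplit]; exact dvd_add (dvd_mul_right _ _) (dvd_mul_of_dvd_left (by norm_num) _))
  have hdigit : m % 3 = m' % 3 := by omega
  have hquot : (spread (m / 3) : ℤ) - spread (m' / 3) = u ^ 2 + v ^ 2 := by
    push_cast at huv
    omega
  have := eq_of_spread_sub_spread_eq_sq_add_sq hquot
  omega
termination_by m + m'
decreasing_by omega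

theorem spread_injective : Function.Injective spread := fun m m' h =>
  eq_of_spread_sub_spread_eq_sq_add_sq (x := 0) (y := 0) (by simp [h])

def spreadSet (t : ℕ) : Finset ℕ :=
  (Finset.range (3 ^ t)).image (spread · + 1)

theorem card_spreadSet (t : ℕ) : (spreadSet t).card = 3 ^ t := by
  rw [spreadSet, Finset.card_image_of_injective _
    fun m m' h => spread_injective (Nat.add_right_cancel h), Finset.card_range]

theorem spreadSet_subset (t : ℕ) : spreadSet t ⊆ Finset.Icc 1 (9 ^ t) := by
  intro a ha
  obtain ⟨m, hm, rfl⟩ := Finset.mem_image.mp ha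
  have := spread_lt (Finset.mem_range.mp hm)
  simp only [Finset.mem_Icc]
  omega

theorem sub_eq_zero_of_mem_spreadSet {t a a' : ℕ} (ha : a ∈ spreadSet t) (ha' : a' ∈ spreadSet t)
    {x y : ℤ} (h : (a : ℤ) - a' = x ^ 2 + y ^ 2) : (a : ℤ) - a' = 0 := by
  obtain ⟨m, -, rfl⟩ := Finset.mem_image.mp ha
  obtain ⟨m', -, rfl⟩ := Finset.mem_image.mp ha'
  push_cast at h ⊢
  obtain rfl := eq_of_spread_sub_spread_eq_sq_add_sq (m := m) (m' := m') (x := x) (y := y)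
    (by linarith)
  ring

theorem sqrt_le_three_mul_three_pow_log_nine (N : ℕ) : (N : ℝ) ^ ((1 : ℝ) / 2) ≤ 3 * 3 ^ Nat.log 9 N := by
  rw [← Real.sqrt_eq_rpow, Real.sqrt_le_iff]
  refine ⟨by positivity, ?_⟩
  have : N < 9 ^ (Nat.log 9 N + 1) := Nat.lt_pow_succ_log_self (by norm_num) N
  rw [mul_pow, ← pow_mul, mul_comm _ 2, pow_mul]
  exact_mod_cast (by rw [pow_succ] at this; omega : N ≤ 3 ^ 2 * 9 ^ Nat.log 9 N)

theorem stmt_18 :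
    ∃ c : ℝ, 0 < c ∧ ∀ N : ℕ, 0 < N → ∃ A : Finset ℕ,
      A ⊆ Finset.Icc 1 N ∧
      (∀ a ∈ A, ∀ a' ∈ A, ∀ x y : ℤ, (a : ℤ) - (a' : ℤ) = x ^ 2 + y ^ 2 →
        (a : ℤ) - (a' : ℤ) = 0) ∧
      c * (N : ℝ) ^ ((1 : ℝ) / 2) ≤ A.card := by
  refine ⟨1 / 3, by norm_num, fun N hN => ⟨spreadSet (Nat.log 9 N), ?_, ?_, ?_⟩⟩
  · exact (spreadSet_subset _).trans
      (Finset.Icc_subset_Icc le_rfl (Nat.pow_log_le_self 9 hN.ne'))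
  · exact fun a ha a' ha' x y => sub_eq_zero_of_mem_spreadSet ha ha'
  · rw [card_spreadSet]
    push_cast
    linarith [sqrt_le_three_mul_three_pow_log_nine N]
end
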